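/- For a fixed integer ω ≥ 0, n > 2ω+1, and any l ≥ 0, the number of Ω^ω-trees of size n with exactly l cherries satisfies |Ω^ω_{n,l}| = sum over k from 0 to ω and j from 0 to ⌈k/2⌉ of C(n-1,k) * |Ω^ω_{n-1-k, l-j}| * e_{k,j}, where e_{k,j} is the number of ranked trees of size k with j cherries. -/

import Mathlib

/-!
Common definitions: plane (ordered) labeled binary trees, the flip relation
generating the "unordered" identification, ranked trees, Ω-trees, and counts.
-/

/-- Plane rooted binary trees whose internal nodes carry a label. -/
inductive PTree : Type where
  | leaf : PTree
  | node : ℕ → PTree → PTree → PTree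
deriving DecidableEq

namespace PTree

/-- Size: the number of internal nodes. -/
def size : PTree → ℕ
  | leaf => 0
  | node _ l r => l.size + r.size + 1

/-- Number of cherries: internal nodes whose two children are leaves. -/
def cherries : PTree → ℕ
  | leaf => 0
  | node _ leaf leaf => 1
  | node _ l r => l.cherries + r.cherries

/-- Multiset of labels of internal nodes. -/
def labels : PTree → Multiset ℕ
  | leaf => 0
  | node k l r => k ::ₘ (l.labels + r.labels)

/-- Labels increase away from the root: each internal node's label is smaller
than all labels in its subtrees. -/
def Incr : PTree → Prop
  | leaf => True
  | node k l r =>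
      (∀ m ∈ l.labels, k < m) ∧ (∀ m ∈ r.labels, k < m) ∧ Incr l ∧ Incr r

/-- A ranked tree of size `n`: labels increase from the root and the internal
labels are exactly `{1, …, n}` (each occurring once). -/
def IsRanked (n : ℕ) (t : PTree) : Prop :=
  t.Incr ∧ t.labels = (Finset.Icc 1 n).val

/-- The Ω-condition: at every internal node, the smaller of the two child
subtrees has at most `ω` internal nodes. -/
def OmegaOK (ω : ℕ) : PTree → Prop
  | leaf => True
  | node _ l r => min l.size r.size ≤ ω ∧ OmegaOK ω l ∧ OmegaOK ω r

/-- One-step flip: swap the two children of some internal node. -/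
inductive Flip : PTree → PTree → Prop
  | swap (k : ℕ) (l r : PTree) : Flip (node k l r) (node k r l)
  | congL {l l' : PTree} (k : ℕ) (r : PTree) : Flip l l' → Flip (node k l r) (node k l' r)
  | congR {r r' : PTree} (k : ℕ) (l : PTree) : Flip r r' → Flip (node k l r) (node k l r')

end PTree

/-- Setoid on trees satisfying `P`, identifying trees up to swapping children
(so that left/right order is immaterial). -/
def treeSetoid (P : PTree → Prop) : Setoid {t : PTree // P t} :=
  Relation.EqvGen.setoid (fun a b => PTree.Flip a.1 b.1)

/-- `|R_n|` : the number of ranked trees (histories) of size `n`. -/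
noncomputable def rankedCount (n : ℕ) : ℕ :=
  Nat.card (Quotient (treeSetoid (PTree.IsRanked n)))

/-- `e_{n,l}` : the number of ranked trees of size `n` with `l` cherries. -/
noncomputable def rankedCountC (n l : ℕ) : ℕ :=
  Nat.card (Quotient (treeSetoid (fun t => PTree.IsRanked n t ∧ t.cherries = l)))

/-- `|Ω^ω_n|` : the number of Ω^ω-trees of size `n`. -/
noncomputable def omegaCount (ω n : ℕ) : ℕ :=
  Nat.card (Quotient (treeSetoid (fun t => PTree.IsRanked n t ∧ PTree.OmegaOK ω t)))

/-- `|Ω^ω_{n,l}|` : the number of Ω^ω-trees of size `n` with `l` cherries. -/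
noncomputable def omegaCountC (ω n l : ℕ) : ℕ :=
  Nat.card (Quotient (treeSetoid
    (fun t => PTree.IsRanked n t ∧ PTree.OmegaOK ω t ∧ t.cherries = l)))

/-!
A ranked tree is really unordered, so we work in the quotient `UTree` of plane trees by child
swaps; there a root with two subtrees is determined up to the order of the subtrees. A ranked
tree of size `n` has root label `1` and two subtrees ranked on complementary parts of
`{2, …, n}`. In an Ω^ω-tree with `n > 2ω + 1`, exactly one of them, of some size `k ≤ ω`, is
small. The small subtree is an arbitrary ranked tree (every tree with at most `ω` nodes is an
Ω^ω-tree), the large one is an Ω^ω-tree, and their cherry counts add up. Choosing the `k` labels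
of the small subtree (`C(n-1, k)` ways) and relabelling both subtrees by rank gives the sum.
-/

open Finset

lemma Relation.EqvGen.apply_eq {α β : Type*} {r : α → α → Prop} {f : α → β}
    (hf : ∀ a b, r a b → f a = f b) {a b : α} (h : EqvGen r a b) : f a = f b :=
  congrArg (Quot.lift f hf) (Quot.eqvGen_sound h)

lemma Relation.EqvGen.subtype {α : Type*} {r : α → α → Prop} {p : α → Prop}
    (hp : ∀ a b, r a b → p a = p b) {a b : α} (h : EqvGen r a b) (ha : p a) (hb : p b) :
    EqvGen (fun x y : Subtype p => r x y) ⟨a, ha⟩ ⟨b, hb⟩ := by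
  induction h with
  | rel _ _ h => exact .rel _ _ h
  | refl => exact .refl _
  | symm _ _ _ ih => exact .symm _ _ (ih hb ha)
  | trans _ c _ hac _ ih₁ ih₂ =>
    have hc : p c := hac.apply_eq hp ▸ ha
    exact .trans _ _ _ (ih₁ ha hc) (ih₂ hc hb)

namespace Finset

def rankIn (S : Finset ℕ) (m : ℕ) : ℕ := Nat.count (· ∈ S) m + 1

noncomputable def elemOfRank (S : Finset ℕ) (i : ℕ) : ℕ := Nat.nth (· ∈ S) (i - 1)

lemma Icc_one_val {n : ℕ} (hn : 1 ≤ n) : (Icc 1 n).val = 1 ::ₘ (Icc 2 n).val := by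
  have : Icc 1 n = (Icc 2 n).cons 1 (by simp) := by
    ext m
    simp only [mem_Icc, mem_cons]
    omega
  rw [this, cons_val]

variable (S : Finset ℕ) {m i : ℕ}

private lemma toFinset_ofPred_mem (hf : (Set.ofPred (· ∈ S)).Finite) : hf.toFinset = S := by
  ext; simp

lemma rankIn_mem_Icc (hm : m ∈ S) : S.rankIn m ∈ Icc 1 #S := by
  have := Nat.count_lt_card (p := (· ∈ S)) S.finite_toSet hm
  rw [toFinset_ofPred_mem] at this
  simp only [rankIn, mem_Icc]
  omega

lemma elemOfRank_mem (hi : i ∈ Icc 1 #S) : S.elemOfRank i ∈ S := by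
  rw [mem_Icc] at hi
  exact Nat.nth_mem_of_lt_card (p := (· ∈ S)) S.finite_toSet (by rw [toFinset_ofPred_mem]; omega)

lemma elemOfRank_rankIn (hm : m ∈ S) : S.elemOfRank (S.rankIn m) = m := by
  simp only [elemOfRank, rankIn, Nat.add_sub_cancel, Nat.nth_count hm]

lemma rankIn_elemOfRank (hi : i ∈ Icc 1 #S) : S.rankIn (S.elemOfRank i) = i := by
  rw [mem_Icc] at hi
  rw [rankIn, elemOfRank,
    Nat.count_nth_of_lt_card_finite (p := (· ∈ S)) S.finite_toSet
      (by rw [toFinset_ofPred_mem]; omega)]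
  omega

lemma strictMonoOn_rankIn : StrictMonoOn S.rankIn S :=
  fun _ ha _ _ h => Nat.succ_lt_succ (Nat.count_strict_mono ha h)

lemma strictMonoOn_elemOfRank : StrictMonoOn S.elemOfRank (Icc 1 #S) := by
  intro a ha b hb h
  rw [coe_Icc, Set.mem_Icc] at ha hb
  exact Nat.nth_lt_nth_of_lt_card (p := (· ∈ S)) S.finite_toSet (by omega)
    (by rw [toFinset_ofPred_mem]; omega)

lemma image_rankIn : S.image S.rankIn = Icc 1 #S := by
  ext i
  refine ⟨fun h => ?_, fun h => mem_image.2 ⟨_, S.elemOfRank_mem h, S.rankIn_elemOfRank h⟩⟩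
  obtain ⟨m, hm, rfl⟩ := mem_image.1 h
  exact S.rankIn_mem_Icc hm

lemma image_elemOfRank : (Icc 1 #S).image S.elemOfRank = S := by
  ext m
  refine ⟨fun h => ?_, fun h => mem_image.2 ⟨_, S.rankIn_mem_Icc h, S.elemOfRank_rankIn h⟩⟩
  obtain ⟨i, hi, rfl⟩ := mem_image.1 h
  exact S.elemOfRank_mem hi

end Finset

namespace PTree

lemma size_eq_card_labels (t : PTree) : t.size = Multiset.card t.labels := by
  induction t with
  | leaf => rfl
  | node k a b iha ihb => simp [size, labels, iha, ihb]

lemma cherries_node (k : ℕ) {a b : PTree} (h : a.size + b.size ≠ 0) :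
    (node k a b).cherries = a.cherries + b.cherries := by
  cases a <;> cases b <;> simp_all [cherries, size]

lemma cherries_le (t : PTree) : t.cherries ≤ (t.size + 1) / 2 := by
  induction t with
  | leaf => simp [cherries]
  | node k a b iha ihb =>
    by_cases h : a.size + b.size = 0
    · cases a <;> cases b <;> simp_all [cherries, size]
    · rw [cherries_node k h]
      simp only [size]
      omega

lemma omegaOK_of_size_le {ω : ℕ} {t : PTree} (h : t.size ≤ ω) : t.OmegaOK ω := by
  induction t with
  | leaf => trivial
  | node k a b iha ihb =>
    simp only [size] at h
    exact ⟨by omega, iha (by omega), ihb (by omega)⟩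

lemma finite_setOf_size_le {A : Set ℕ} (hA : A.Finite) (N : ℕ) :
    {t : PTree | t.size ≤ N ∧ ∀ m ∈ t.labels, m ∈ A}.Finite := by
  induction N with
  | zero =>
    refine (Set.finite_singleton leaf).subset ?_
    rintro (_ | _) ⟨h, -⟩
    · rfl
    · simp [size] at h
  | succ N ih =>
    refine (((hA.prod (ih.prod ih)).image fun p => node p.1 p.2.1 p.2.2).insert leaf).subset ?_
    rintro (_ | ⟨k, a, b⟩) ⟨h, hl⟩
    · exact Set.mem_insert _ _
    · simp only [size] at h
      simp only [labels, Multiset.mem_cons, Multiset.mem_add] at hl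
      exact Set.mem_insert_of_mem _ ⟨(k, a, b), ⟨hl k (.inl rfl),
        ⟨(by omega : a.size ≤ N), fun m hm => hl m (.inr (.inl hm))⟩,
        ⟨(by omega : b.size ≤ N), fun m hm => hl m (.inr (.inr hm))⟩⟩, rfl⟩

def relabel (f : ℕ → ℕ) : PTree → PTree
  | leaf => leaf
  | node k a b => node (f k) (a.relabel f) (b.relabel f)

section relabel

variable (f : ℕ → ℕ) (t : PTree)

@[simp] lemma size_relabel : (t.relabel f).size = t.size := by
  induction t with
  | leaf => rfl
  | node k a b iha ihb => simp [relabel, size, iha, ihb]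

@[simp] lemma cherries_relabel : (t.relabel f).cherries = t.cherries := by
  induction t with
  | leaf => rfl
  | node k a b iha ihb => cases a <;> cases b <;> simp_all [relabel, cherries]

@[simp] lemma labels_relabel : (t.relabel f).labels = t.labels.map f := by
  induction t with
  | leaf => rfl
  | node k a b iha ihb => simp [relabel, labels, iha, ihb]

@[simp] lemma omegaOK_relabel {ω : ℕ} : (t.relabel f).OmegaOK ω ↔ t.OmegaOK ω := by
  induction t with
  | leaf => exact Iff.rfl
  | node k a b iha ihb => simp [relabel, OmegaOK, iha, ihb]

lemma relabel_relabel (g : ℕ → ℕ) : (t.relabel f).relabel g = t.relabel (g ∘ f) := by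
  induction t with
  | leaf => rfl
  | node k a b iha ihb => simp [relabel, iha, ihb]

variable {f t}

lemma relabel_eq_self (h : ∀ m ∈ t.labels, f m = m) : t.relabel f = t := by
  induction t with
  | leaf => rfl
  | node k a b iha ihb =>
    simp only [labels, Multiset.mem_cons, Multiset.mem_add] at h
    simp only [relabel, h k (.inl rfl), iha fun m hm => h m (.inr (.inl hm)),
      ihb fun m hm => h m (.inr (.inr hm))]

lemma Incr.relabel {s : Set ℕ} (hf : StrictMonoOn f s) (hs : ∀ m ∈ t.labels, m ∈ s)
    (ht : t.Incr) : (t.relabel f).Incr := by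
  induction t with
  | leaf => trivial
  | node k a b iha ihb =>
    simp only [labels, Multiset.mem_cons, Multiset.mem_add] at hs
    obtain ⟨ha, hb, ha', hb'⟩ := ht
    refine ⟨?_, ?_, iha (fun m hm => hs m (.inr (.inl hm))) ha',
      ihb (fun m hm => hs m (.inr (.inr hm))) hb'⟩
    · simp only [labels_relabel, Multiset.forall_mem_map_iff]
      exact fun m hm => hf (hs k (.inl rfl)) (hs m (.inr (.inl hm))) (ha m hm)
    · simp only [labels_relabel, Multiset.forall_mem_map_iff]
      exact fun m hm => hf (hs k (.inl rfl)) (hs m (.inr (.inr hm))) (hb m hm)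

end relabel

namespace Flip

variable {t t' : PTree}

lemma symm (h : Flip t t') : Flip t' t := by
  induction h with
  | swap k a b => exact swap k b a
  | congL k b _ ih => exact congL k b ih
  | congR k a _ ih => exact congR k a ih

lemma size_eq (h : Flip t t') : t.size = t'.size := by
  induction h with
  | swap => simp only [size]; omega
  | congL _ _ _ ih => simp only [size, ih]
  | congR _ _ _ ih => simp only [size, ih]

lemma size_ne_zero (h : Flip t t') : t.size ≠ 0 := by
  cases h <;> simp [size]

lemma cherries_eq (h : Flip t t') : t.cherries = t'.cherries := by
  induction h with
  | swap k a b => cases a <;> cases b <;> simp only [cherries] <;> omega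
  | congL k b h ih =>
    rw [cherries_node k (by have := h.size_ne_zero; omega),
      cherries_node k (by have := h.symm.size_ne_zero; omega), ih]
  | congR k a h ih =>
    rw [cherries_node k (by have := h.size_ne_zero; omega),
      cherries_node k (by have := h.symm.size_ne_zero; omega), ih]

lemma labels_eq (h : Flip t t') : t.labels = t'.labels := by
  induction h with
  | swap => simp only [labels, add_comm]
  | congL _ _ _ ih => simp only [labels, ih]
  | congR _ _ _ ih => simp only [labels, ih]

lemma incr (h : Flip t t') (ht : t.Incr) : t'.Incr := by
  induction h with
  | swap => exact ⟨ht.2.1, ht.1, ht.2.2.2, ht.2.2.1⟩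
  | congL _ _ h ih => exact ⟨h.labels_eq ▸ ht.1, ht.2.1, ih ht.2.2.1, ht.2.2.2⟩
  | congR _ _ h ih => exact ⟨ht.1, h.labels_eq ▸ ht.2.1, ht.2.2.1, ih ht.2.2.2⟩

lemma omegaOK {ω : ℕ} (h : Flip t t') (ht : t.OmegaOK ω) : t'.OmegaOK ω := by
  induction h with
  | swap => exact ⟨min_comm (α := ℕ) _ _ ▸ ht.1, ht.2.2, ht.2.1⟩
  | congL _ _ h ih => exact ⟨h.size_eq ▸ ht.1, ih ht.2.1, ht.2.2⟩
  | congR _ _ h ih => exact ⟨h.size_eq ▸ ht.1, ht.2.1, ih ht.2.2⟩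

lemma relabel (f : ℕ → ℕ) (h : Flip t t') : Flip (t.relabel f) (t'.relabel f) := by
  induction h with
  | swap => exact swap _ _ _
  | congL _ _ _ ih => exact congL _ _ ih
  | congR _ _ _ ih => exact congR _ _ ih

end Flip

end PTree

def UTree : Type := Quot PTree.Flip

namespace UTree

open PTree (Flip)

def mk : PTree → UTree := Quot.mk _

lemma mk_surjective : Function.Surjective mk := Quot.mk_surjective

def node (k : ℕ) : UTree → UTree → UTree :=
  Quot.map₂ (PTree.node k) (fun a _ _ h => Flip.congR k a h) (fun _ _ b h => Flip.congL k b h)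

lemma node_comm (k : ℕ) (x y : UTree) : node k x y = node k y x := by
  obtain ⟨a, rfl⟩ := mk_surjective x
  obtain ⟨b, rfl⟩ := mk_surjective y
  exact Quot.sound (Flip.swap k a b)

def dest : UTree → Option (ℕ × Sym2 UTree) :=
  Quot.lift (fun | .leaf => none | .node k a b => some (k, s(mk a, mk b))) fun _ _ h => by
    cases h with
    | swap => simp [Sym2.eq_swap]
    | congL _ _ h => simp [Quot.sound h, mk]
    | congR _ _ h => simp [Quot.sound h, mk]

lemma dest_node (k : ℕ) (x y : UTree) : (node k x y).dest = some (k, s(x, y)) :=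
  Quot.induction_on₂ x y fun _ _ => rfl

lemma node_eq_node_iff {k k' : ℕ} {x y x' y' : UTree} :
    node k x y = node k' x' y' ↔ k = k' ∧ (x = x' ∧ y = y' ∨ x = y' ∧ y = x') := by
  constructor
  · intro h
    simpa [dest_node, Sym2.eq_iff] using congrArg dest h
  · rintro ⟨rfl, ⟨rfl, rfl⟩ | ⟨rfl, rfl⟩⟩
    · rfl
    · exact node_comm k _ _

def size : UTree → ℕ := Quot.lift PTree.size fun _ _ h => h.size_eq

def cherries : UTree → ℕ := Quot.lift PTree.cherries fun _ _ h => h.cherries_eq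

def labels : UTree → Multiset ℕ := Quot.lift PTree.labels fun _ _ h => h.labels_eq

def Incr : UTree → Prop := Quot.lift PTree.Incr fun _ _ h => propext ⟨h.incr, h.symm.incr⟩

def OmegaOK (ω : ℕ) : UTree → Prop :=
  Quot.lift (PTree.OmegaOK ω) fun _ _ h => propext ⟨h.omegaOK, h.symm.omegaOK⟩

def relabel (f : ℕ → ℕ) : UTree → UTree :=
  Quot.map (PTree.relabel f) fun _ _ => Flip.relabel f

def IsRankedOn (A : Finset ℕ) (x : UTree) : Prop := x.Incr ∧ x.labels = A.val

lemma IsRankedOn.mem {A : Finset ℕ} {x : UTree} (hx : x.IsRankedOn A) {m : ℕ}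
    (hm : m ∈ x.labels) : m ∈ A :=
  Finset.mem_def.2 (hx.2 ▸ hm)

section node

variable (k : ℕ) (x y : UTree)

lemma size_node : (node k x y).size = x.size + y.size + 1 :=
  Quot.induction_on₂ x y fun _ _ => rfl

lemma labels_node : (node k x y).labels = k ::ₘ (x.labels + y.labels) :=
  Quot.induction_on₂ x y fun _ _ => rfl

lemma incr_node : (node k x y).Incr ↔
    (∀ m ∈ x.labels, k < m) ∧ (∀ m ∈ y.labels, k < m) ∧ x.Incr ∧ y.Incr :=
  Quot.induction_on₂ x y fun _ _ => Iff.rfl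

lemma omegaOK_node {ω : ℕ} : (node k x y).OmegaOK ω ↔
    min x.size y.size ≤ ω ∧ x.OmegaOK ω ∧ y.OmegaOK ω :=
  Quot.induction_on₂ x y fun _ _ => Iff.rfl

variable {x y} in
lemma cherries_node (h : x.size + y.size ≠ 0) :
    (node k x y).cherries = x.cherries + y.cherries := by
  obtain ⟨a, rfl⟩ := mk_surjective x
  obtain ⟨b, rfl⟩ := mk_surjective y
  exact PTree.cherries_node k h

end node

lemma exists_eq_node {x : UTree} (h : x.size ≠ 0) : ∃ k y z, x = node k y z := by
  obtain ⟨_ | ⟨k, a, b⟩, rfl⟩ := mk_surjective x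
  · exact absurd rfl h
  · exact ⟨k, mk a, mk b, rfl⟩

lemma size_eq_card_labels (x : UTree) : x.size = Multiset.card x.labels :=
  Quot.inductionOn x PTree.size_eq_card_labels

lemma cherries_le (x : UTree) : x.cherries ≤ (x.size + 1) / 2 :=
  Quot.inductionOn x PTree.cherries_le

lemma omegaOK_of_size_le {ω : ℕ} {x : UTree} (h : x.size ≤ ω) : x.OmegaOK ω := by
  obtain ⟨t, rfl⟩ := mk_surjective x
  exact PTree.omegaOK_of_size_le h

section relabel

variable (f : ℕ → ℕ) (x : UTree)

@[simp] lemma cherries_relabel : (x.relabel f).cherries = x.cherries :=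
  Quot.inductionOn x (PTree.cherries_relabel f)

@[simp] lemma omegaOK_relabel {ω : ℕ} : (x.relabel f).OmegaOK ω ↔ x.OmegaOK ω :=
  Quot.inductionOn x fun t => t.omegaOK_relabel f

lemma relabel_relabel (g : ℕ → ℕ) : (x.relabel f).relabel g = x.relabel (g ∘ f) :=
  Quot.inductionOn x fun t => congrArg mk (t.relabel_relabel f g)

variable {f x}

lemma relabel_eq_self (h : ∀ m ∈ x.labels, f m = m) : x.relabel f = x := by
  obtain ⟨t, rfl⟩ := mk_surjective x
  exact congrArg mk (PTree.relabel_eq_self h)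

lemma IsRankedOn.relabel {A : Finset ℕ} (hx : x.IsRankedOn A) (hf : StrictMonoOn f A) :
    (x.relabel f).IsRankedOn (A.image f) := by
  obtain ⟨t, rfl⟩ := mk_surjective x
  refine ⟨hx.1.relabel hf fun _ hm => hx.mem hm, ?_⟩
  show (t.relabel f).labels = _
  rw [PTree.labels_relabel, Finset.image_val_of_injOn hf.injOn]
  exact congrArg _ hx.2

end relabel

variable {A : Finset ℕ} {x : UTree}

lemma IsRankedOn.size_eq (hx : x.IsRankedOn A) : x.size = #A := by
  rw [size_eq_card_labels, hx.2, Finset.card_val]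

lemma finite_setOf_isRankedOn (A : Finset ℕ) : {x : UTree | x.IsRankedOn A}.Finite := by
  refine ((PTree.finite_setOf_size_le A.finite_toSet #A).image mk).subset fun x hx => ?_
  obtain ⟨t, rfl⟩ := mk_surjective x
  exact ⟨t, ⟨hx.size_eq.le, fun m hm => hx.mem hm⟩, rfl⟩

lemma IsRankedOn.relabel_rankIn (hx : x.IsRankedOn A) :
    (x.relabel A.rankIn).IsRankedOn (Icc 1 #A) :=
  A.image_rankIn ▸ hx.relabel A.strictMonoOn_rankIn

lemma IsRankedOn.relabel_elemOfRank (hx : x.IsRankedOn (Icc 1 #A)) :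
    (x.relabel A.elemOfRank).IsRankedOn A := by
  simpa only [A.image_elemOfRank] using hx.relabel A.strictMonoOn_elemOfRank

instance (A : Finset ℕ) (Q : UTree → Prop) : Finite {x : UTree // x.IsRankedOn A ∧ Q x} :=
  ((finite_setOf_isRankedOn A).subset fun _ hx => hx.1).to_subtype

lemma card_isRankedOn (A : Finset ℕ) {Q : UTree → Prop}
    (hQ : ∀ f x, Q (x.relabel f) ↔ Q x) :
    Nat.card {x // x.IsRankedOn A ∧ Q x} = Nat.card {x // x.IsRankedOn (Icc 1 #A) ∧ Q x} :=
  Nat.card_congr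
    { toFun := fun x => ⟨x.1.relabel A.rankIn, x.2.1.relabel_rankIn, (hQ _ _).2 x.2.2⟩
      invFun := fun y => ⟨y.1.relabel A.elemOfRank, y.2.1.relabel_elemOfRank, (hQ _ _).2 y.2.2⟩
      left_inv := fun x => Subtype.ext <| (relabel_relabel _ _ _).trans <|
        relabel_eq_self fun _ hm => A.elemOfRank_rankIn (x.2.1.mem hm)
      right_inv := fun y => Subtype.ext <| (relabel_relabel _ _ _).trans <|
        relabel_eq_self fun _ hm => A.rankIn_elemOfRank (y.2.1.mem hm) }

end UTree

lemma card_quotient_treeSetoid {P : PTree → Prop} {Q : UTree → Prop}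
    (hPQ : ∀ t, Q (UTree.mk t) ↔ P t) :
    Nat.card (Quotient (treeSetoid P)) = Nat.card {x // Q x} := by
  have hP (a b : PTree) (h : PTree.Flip a b) : P a = P b := by
    rw [← propext (hPQ a), ← propext (hPQ b), show UTree.mk a = UTree.mk b from Quot.sound h]
  refine Nat.card_eq_of_bijective (Quotient.lift (fun a => ⟨UTree.mk a.1, (hPQ a).2 a.2⟩)
    fun _ _ h => Subtype.ext <|
      h.apply_eq (f := fun a : Subtype P => UTree.mk a.1) fun _ _ h => Quot.sound h) ⟨?_, ?_⟩
  · rintro ⟨a⟩ ⟨b⟩ h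
    exact Quotient.sound
      (Relation.EqvGen.subtype hP (Quot.eqvGen_exact (congrArg Subtype.val h)) a.2 b.2)
  · rintro ⟨x, hx⟩
    obtain ⟨t, rfl⟩ := UTree.mk_surjective x
    exact ⟨Quotient.mk _ ⟨t, (hPQ t).1 hx⟩, rfl⟩

lemma omegaCountC_eq_card (ω n l : ℕ) : omegaCountC ω n l =
    Nat.card {x : UTree // x.IsRankedOn (Icc 1 n) ∧ x.OmegaOK ω ∧ x.cherries = l} :=
  card_quotient_treeSetoid fun _ => Iff.rfl

lemma rankedCountC_eq_card (k j : ℕ) : rankedCountC k j =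
    Nat.card {x : UTree // x.IsRankedOn (Icc 1 k) ∧ x.cherries = j} :=
  card_quotient_treeSetoid fun _ => Iff.rfl

namespace UTree

lemma isRankedOn_Icc_node_iff {n k : ℕ} (hn : 1 ≤ n) {x y : UTree} :
    (node k x y).IsRankedOn (Icc 1 n) ↔
      k = 1 ∧ ∃ S ⊆ Icc 2 n, x.IsRankedOn (Icc 2 n \ S) ∧ y.IsRankedOn S := by
  rw [IsRankedOn, incr_node, labels_node]
  constructor
  · rintro ⟨⟨hxk, hyk, hx, hy⟩, hlab⟩
    have hmem (m : ℕ) : m ∈ k ::ₘ (x.labels + y.labels) ↔ 1 ≤ m ∧ m ≤ n := by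
      simp [hlab]
    obtain rfl : k = 1 := by
      have hk := (hmem k).1 (Multiset.mem_cons_self _ _)
      rcases Multiset.mem_cons.1 ((hmem 1).2 ⟨le_rfl, hn⟩) with h | h
      · exact h.symm
      · rcases Multiset.mem_add.1 h with h | h
        · exact absurd (hxk 1 h) (by omega)
        · exact absurd (hyk 1 h) (by omega)
    have hsplit : x.labels + y.labels = (Icc 2 n).val :=
      (Multiset.cons_inj_right 1).1 (hlab.trans (Icc_one_val hn))
    have hy_val : y.labels.toFinset.val = y.labels :=
      (Multiset.toFinset_val _).trans <| Multiset.dedup_eq_self.2 <|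
        Multiset.nodup_of_le (Multiset.le_add_left _ _) (hsplit ▸ (Icc 2 n).nodup)
    refine ⟨rfl, y.labels.toFinset, fun m hm => ?_, ⟨hx, ?_⟩, hy, hy_val.symm⟩
    · rw [mem_def, ← hsplit]
      exact Multiset.mem_add.2 (.inr (Multiset.mem_toFinset.1 hm))
    · rw [sdiff_val, hy_val, ← hsplit, Multiset.add_sub_cancel_right]
  · rintro ⟨rfl, S, hS, ⟨hxi, hxl⟩, ⟨hyi, hyl⟩⟩
    refine ⟨⟨fun m hm => ?_, fun m hm => ?_, hxi, hyi⟩, ?_⟩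
    · have := (mem_sdiff.1 (mem_def.2 (hxl ▸ hm))).1
      simp only [mem_Icc] at this
      omega
    · have := hS (mem_def.2 (hyl ▸ hm))
      simp only [mem_Icc] at this
      omega
    · rw [hxl, hyl, sdiff_val, Multiset.sub_add_cancel (val_le_iff.2 hS), Icc_one_val hn]

end UTree

open UTree

/-- Indexes the terms of the right-hand side: `k`, `j` and `S` are the size, the cherry count
and the label set of the small root subtree. -/
def RootSplit (ω n l : ℕ) : Type :=
  Σ k : Fin (ω + 1), Σ j : Fin ((k + 1) / 2 + 1), Σ S : powersetCard k (Icc 2 n),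
    {x : UTree // x.IsRankedOn (Icc 2 n \ S) ∧ x.OmegaOK ω ∧ x.cherries + j = l} ×
      {y : UTree // y.IsRankedOn S ∧ y.cherries = j}

namespace RootSplit

variable {ω n l : ℕ}

def graft (p : RootSplit ω n l) : UTree := node 1 p.2.2.2.1 p.2.2.2.2

lemma card_sdiff_Icc_two {S : Finset ℕ} {k : ℕ} (hS : S ∈ powersetCard k (Icc 2 n)) :
    #(Icc 2 n \ S) = n - 1 - k := by
  rw [mem_powersetCard] at hS
  rw [card_sdiff_of_subset hS.1, Nat.card_Icc, hS.2]
  omega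

lemma graft_mem (hn : 2 * ω + 1 < n) (p : RootSplit ω n l) :
    p.graft.IsRankedOn (Icc 1 n) ∧ p.graft.OmegaOK ω ∧ p.graft.cherries = l := by
  obtain ⟨⟨k, hk⟩, ⟨j, -⟩, ⟨S, hS⟩, ⟨x, hx, hxω, hxl⟩, ⟨y, hy, hyj⟩⟩ := p
  dsimp only [graft]
  have hxs : x.size = n - 1 - k := hx.size_eq.trans (card_sdiff_Icc_two hS)
  have hys : y.size = k := hy.size_eq.trans (mem_powersetCard.1 hS).2
  refine ⟨(isRankedOn_Icc_node_iff (by omega)).2 ⟨rfl, S, (mem_powersetCard.1 hS).1, hx, hy⟩,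
    (omegaOK_node _ _ _).2 ⟨by omega, hxω, omegaOK_of_size_le (by omega)⟩,
    (cherries_node 1 (by omega)).trans (by rw [hyj]; exact hxl)⟩

lemma node_mem_range_graft {S : Finset ℕ} (hS : S ⊆ Icc 2 n) {x y : UTree}
    (hx : x.IsRankedOn (Icc 2 n \ S)) (hy : y.IsRankedOn S) (hxω : x.OmegaOK ω)
    (hyω : y.size ≤ ω) (hl : x.cherries + y.cherries = l) :
    node 1 x y ∈ Set.range (graft : RootSplit ω n l → UTree) := by
  have hk : #S < ω + 1 := by rw [← hy.size_eq]; omega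
  have hj : y.cherries < (#S + 1) / 2 + 1 := by
    have := y.cherries_le
    rw [hy.size_eq] at this
    omega
  exact ⟨⟨⟨#S, hk⟩, ⟨y.cherries, hj⟩, ⟨S, mem_powersetCard.2 ⟨hS, rfl⟩⟩, ⟨x, hx, hxω, hl⟩,
    ⟨y, hy, rfl⟩⟩, rfl⟩

lemma range_graft (hn : 2 * ω + 1 < n) : Set.range (graft : RootSplit ω n l → UTree) =
    {z | z.IsRankedOn (Icc 1 n) ∧ z.OmegaOK ω ∧ z.cherries = l} := by
  refine Set.Subset.antisymm (Set.range_subset_iff.2 (graft_mem hn)) ?_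
  rintro z ⟨hz, hzω, rfl⟩
  obtain ⟨k, x, y, rfl⟩ := exists_eq_node (by rw [hz.size_eq, Nat.card_Icc]; omega)
  obtain ⟨rfl, S, hS, hx, hy⟩ := (isRankedOn_Icc_node_iff (by omega)).1 hz
  obtain ⟨hmin, hxω, hyω⟩ := (omegaOK_node _ _ _).1 hzω
  have hsize := hz.size_eq
  rw [size_node, Nat.card_Icc] at hsize
  rw [cherries_node 1 (by omega)]
  rcases le_total y.size x.size with hyx | hxy
  · exact node_mem_range_graft hS hx hy hxω (by omega) rfl
  · rw [node_comm, add_comm]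
    refine node_mem_range_graft sdiff_subset ?_ hx hyω (by omega) rfl
    rwa [Finset.sdiff_sdiff_eq_self hS]

/-- The small subtree has size `k ≤ ω < n - 1 - k`, so it cannot trade places with the large
one. -/
lemma graft_injective (hn : 2 * ω + 1 < n) :
    Function.Injective (graft : RootSplit ω n l → UTree) := by
  rintro ⟨⟨k, hk⟩, ⟨j, hj⟩, ⟨S, hS⟩, ⟨x, hx, hxω, hxl⟩, ⟨y, hy, hyj⟩⟩
    ⟨⟨k', hk'⟩, ⟨j', hj'⟩, ⟨S', hS'⟩, ⟨x', hx', hxω', hxl'⟩, ⟨y', hy', hyj'⟩⟩ h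
  obtain ⟨-, ⟨rfl, rfl⟩ | ⟨hxy, -⟩⟩ := node_eq_node_iff.1 h
  · obtain rfl : S = S' := val_inj.1 (hy.2.symm.trans hy'.2)
    obtain rfl : k = k' := (mem_powersetCard.1 hS).2.symm.trans (mem_powersetCard.1 hS').2
    obtain rfl : j = j' := hyj.symm.trans hyj'
    rfl
  · have := congrArg size hxy
    rw [hx.size_eq, card_sdiff_Icc_two hS, hy'.size_eq, (mem_powersetCard.1 hS').2] at this
    omega

lemma card_largeSubtrees (S : powersetCard k (Icc 2 n)) (j : ℕ) :
    Nat.card {x : UTree // x.IsRankedOn (Icc 2 n \ S) ∧ x.OmegaOK ω ∧ x.cherries + j = l} =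
      if j ≤ l then omegaCountC ω (n - 1 - k) (l - j) else 0 := by
  rw [card_isRankedOn _ fun _ _ => by simp, card_sdiff_Icc_two S.2]
  split_ifs with hjl
  · rw [omegaCountC_eq_card]
    exact Nat.card_congr <| Equiv.subtypeEquivRight fun x =>
      and_congr_right' <| and_congr_right' ⟨fun h => by omega, fun h => by omega⟩
  · exact Nat.card_eq_zero.2 <| .inl ⟨fun x => hjl (x.2.2.2 ▸ Nat.le_add_left _ _)⟩

lemma card_smallSubtrees (S : powersetCard k (Icc 2 n)) (j : ℕ) :
    Nat.card {y : UTree // y.IsRankedOn S ∧ y.cherries = j} = rankedCountC k j := by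
  rw [card_isRankedOn _ fun _ _ => by simp, (mem_powersetCard.1 S.2).2, rankedCountC_eq_card]

lemma card_eq (ω n l : ℕ) : Nat.card (RootSplit ω n l) =
    ∑ k ∈ range (ω + 1), ∑ j ∈ range ((k + 1) / 2 + 1),
      (n - 1).choose k * (if j ≤ l then omegaCountC ω (n - 1 - k) (l - j) else 0) *
        rankedCountC k j := by
  rw [RootSplit, Nat.card_sigma, ← Fin.sum_univ_eq_sum_range]
  refine Fintype.sum_congr _ _ fun k => ?_
  rw [Nat.card_sigma, ← Fin.sum_univ_eq_sum_range]
  refine Fintype.sum_congr _ _ fun j => ?_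
  simp only [Nat.card_sigma, Nat.card_prod, card_largeSubtrees, card_smallSubtrees,
    sum_const, card_univ, Fintype.card_coe, card_powersetCard, Nat.card_Icc, smul_eq_mul,
    mul_assoc, show n + 1 - 2 = n - 1 by omega]

end RootSplit

/-- for `n > 2ω+1` and any `l ≥ 0`,
`|Ω^ω_{n,l}| = ∑_{k=0}^{ω} ∑_{j=0}^{⌈k/2⌉} C(n-1,k) |Ω^ω_{n-1-k, l-j}| e_{k,j}`,
with the convention `|Ω^ω_{m,j}| = 0` for `j < 0` (the `if` below). Here
`⌈k/2⌉ = (k+1)/2` in natural-number arithmetic. -/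
theorem omegaCountC_recursion (ω n l : ℕ) (hn : 2 * ω + 1 < n) :
    omegaCountC ω n l =
      ∑ k ∈ Finset.range (ω + 1), ∑ j ∈ Finset.range ((k + 1) / 2 + 1),
        Nat.choose (n - 1) k *
          (if j ≤ l then omegaCountC ω (n - 1 - k) (l - j) else 0) *
          rankedCountC k j := by
  rw [omegaCountC_eq_card, ← RootSplit.card_eq, ← Nat.card_range_of_injective
    (RootSplit.graft_injective hn), RootSplit.range_graft hn]
  rfl
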